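/- arXiv:2306.04200 — 3 statements merged into one kernel-verified Lean document; each statement's English description precedes it below -/
import Mathlib

section
/- Let R ≅ R₁ × ⋯ × Rₙ (n ≥ 2), where each Rᵢ is a local ring with unique nonzero proper ideal Mᵢ. Then every clique of size n + 1 in PIS(R) has the form {I₁, …, Iₙ₊₁} (up to relabeling coordinates) where I₁ = M₁ × R₂ × ⋯ × Rₙ, Iₖ = M₁ × R₂ × ⋯ × Rₖ₋₁ × Jₖ × Rₖ₊₁ × ⋯ × Rₙ for 2 ≤ k ≤ n with Jₖ ∈ {(0), Mₖ}, and Iₙ₊₁ = (0) × R₂ × ⋯ × Rₙ. -/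
open SimpleGraph

/-- The prime ideal sum graph of a commutative ring. -/
def PIS (R : Type*) [CommRing R] :
    SimpleGraph {I : Ideal R // I ≠ ⊥ ∧ I ≠ ⊤} where
  Adj I J := I ≠ J ∧ (I.1 + J.1).IsPrime
  symm := by
    constructor
    rintro I J ⟨hne, hp⟩
    exact ⟨hne.symm, by rwa [add_comm]⟩
  loopless := by constructor; rintro I ⟨hne, -⟩; exact hne rfl

/-- The ideal of the product ring cut out by the condition that coordinate `p`
lies in `K` (i.e. `R₁ × ⋯ × K × ⋯ × Rₙ`). -/
def coordIdeal {n : ℕ} (R : Fin n → Type*) [∀ i, CommRing (R i)]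
    (p : Fin n) (K : Ideal (R p)) : Ideal (∀ i, R i) :=
  Ideal.comap (Pi.evalRingHom R p) K

/-!
Every proper ideal of `Rᵢ` lies in `Mᵢ`, and `(0)` is not prime in `Rᵢ`, so the primes of
`∏ Rᵢ` are the ideals `Mₚ × ∏_{i ≠ p} Rᵢ`. Hence `I + J` is prime exactly when the sets of
coordinates at which `I` and `J` are proper meet in a single coordinate `p`, with
`Iₚ + Jₚ = Mₚ`. For a clique of size `n + 1` these are `n + 1` subsets of an `n`-element set
meeting pairwise in one point, so by Fisher's inequality they share a point `p`. Away from `p`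
the sets of proper coordinates are then pairwise disjoint, and since there are `n + 1` ideals,
exactly one of them is proper at each `k ≠ p`, and the two remaining ones are `Mₚ × ∏ Rᵢ` and
`(0) × ∏ Rᵢ`.
-/

theorem eq_zero_of_sum_add_mul_eq_zero {ι K : Type*} [Fintype ι] [CommRing K]
    [LinearOrder K] [IsStrictOrderedRing K] {g d : ι → K} (hd : ∀ i, 0 < d i)
    (h : ∀ j, ∑ i, g i + d j * g j = 0) (j : ι) : g j = 0 := by
  set S := ∑ i, g i
  have hexpand : S * S + ∑ i, d i * g i ^ 2 = 0 := by
    calc S * S + ∑ i, d i * g i ^ 2 = ∑ i, g i * (S + d i * g i) := by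
          rw [Finset.sum_mul, ← Finset.sum_add_distrib]; congr 1; ext i; ring
      _ = 0 := by simp [h]
  have hterm : ∀ i ∈ Finset.univ, 0 ≤ d i * g i ^ 2 := fun i _ => by have := hd i; positivity
  have hzero : ∑ i, d i * g i ^ 2 = 0 :=
    le_antisymm (by nlinarith [mul_self_nonneg S]) (Finset.sum_nonneg hterm)
  have := (Finset.sum_eq_zero_iff_of_nonneg hterm).1 hzero j (Finset.mem_univ j)
  simpa [(hd j).ne'] using this

namespace Finset

/-- Nonuniform Fisher inequality. Paired with `v j`, a vanishing combination `∑ gᵢ • vᵢ` of the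
indicator vectors gives `∑ gᵢ + (#(T j) - 1) * g j = 0`, which forces `g = 0`. -/
theorem card_le_of_pairwise_card_inter_eq_one {ι α : Type*} [Fintype ι] [Fintype α]
    [DecidableEq α] (T : ι → Finset α) (hT : ∀ i, 2 ≤ #(T i))
    (hinter : Pairwise fun i j => #(T i ∩ T j) = 1) : Fintype.card ι ≤ Fintype.card α := by
  classical
  let v : ι → α → ℚ := fun i a => if a ∈ T i then 1 else 0
  suffices hv : LinearIndependent ℚ v by simpa using hv.fintype_card_le_finrank
  rw [Fintype.linearIndependent_iff]
  intro g hg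
  refine eq_zero_of_sum_add_mul_eq_zero (d := fun j => (#(T j) : ℚ) - 1)
    (fun j => by have := hT j; simp only [sub_pos]; exact_mod_cast this) fun j => ?_
  have hinner : ∀ i, ∑ a ∈ T j, v i a = 1 + if i = j then (#(T j) : ℚ) - 1 else 0 := by
    intro i
    simp only [v, sum_boole, filter_mem_eq_inter]
    split_ifs with hij
    · simp [hij]
    · rw [inter_comm, hinter hij]; simp
  calc ∑ i, g i + (#(T j) - 1 : ℚ) * g j = ∑ i, g i * ∑ a ∈ T j, v i a := by
        simp only [hinner, mul_add, mul_one, mul_ite, mul_zero, sum_add_distrib, sum_ite_eq',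
          mem_univ, if_true, mul_comm]
    _ = ∑ a ∈ T j, (∑ i, g i • v i) a := by
        simp only [sum_apply, mul_sum]; exact sum_comm
    _ = 0 := by rw [hg]; simp

theorem exists_forall_mem_of_pairwise_card_inter_eq_one {ι α : Type*} [Fintype ι]
    [Fintype α] [DecidableEq α] (T : ι → Finset α) (hT : ∀ i, (T i).Nonempty)
    (hinter : Pairwise fun i j => #(T i ∩ T j) = 1)
    (hcard : Fintype.card α < Fintype.card ι) : ∃ a, ∀ i, a ∈ T i := by
  by_cases hsingleton : ∃ i, #(T i) = 1
  · obtain ⟨i, hi⟩ := hsingleton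
    obtain ⟨a, ha⟩ := card_eq_one.1 hi
    refine ⟨a, fun j => ?_⟩
    rcases eq_or_ne i j with rfl | hij
    · simp [ha]
    · have hsub : T i ∩ T j = T i :=
        eq_of_subset_of_card_le inter_subset_left (by rw [hi, hinter hij])
      exact inter_eq_left.1 hsub (by simp [ha])
  · push Not at hsingleton
    have hT2 : ∀ i, 2 ≤ #(T i) := fun i => by
      have := (hT i).card_pos; have := hsingleton i; omega
    exact absurd (card_le_of_pairwise_card_inter_eq_one T hT2 hinter) hcard.not_ge

end Finset

namespace Ideal

variable {A : Type*} [CommRing A]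

def IsUniqueNontrivial (M : Ideal A) : Prop :=
  M ≠ ⊥ ∧ M ≠ ⊤ ∧ ∀ I : Ideal A, I ≠ ⊥ → I ≠ ⊤ → I = M

namespace IsUniqueNontrivial

variable {M I J : Ideal A} (hM : M.IsUniqueNontrivial)
include hM

theorem eq_bot_or_eq_or_eq_top (I : Ideal A) : I = ⊥ ∨ I = M ∨ I = ⊤ := by
  by_cases hb : I = ⊥
  · exact .inl hb
  by_cases ht : I = ⊤
  · exact .inr (.inr ht)
  exact .inr (.inl (hM.2.2 I hb ht))

theorem le_of_ne_top (hI : I ≠ ⊤) : I ≤ M := by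
  rcases hM.eq_bot_or_eq_or_eq_top I with rfl | rfl | rfl
  exacts [bot_le, le_rfl, absurd rfl hI]

theorem sup_eq_top_iff : I ⊔ J = ⊤ ↔ I = ⊤ ∨ J = ⊤ := by
  refine ⟨fun h => ?_, by rintro (rfl | rfl) <;> simp⟩
  by_contra! hIJ
  exact hM.2.1 (top_le_iff.1 (h ▸ sup_le (hM.le_of_ne_top hIJ.1) (hM.le_of_ne_top hIJ.2)))

theorem not_isPrime_bot : ¬ (⊥ : Ideal A).IsPrime := by
  intro hbot
  obtain ⟨x, hxM, hx0⟩ := Submodule.exists_mem_ne_zero_of_ne_bot hM.1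
  have hxx : x * x ≠ 0 := fun h => hx0 ((hbot.mem_or_mem (h ▸ zero_mem ⊥)).elim id id)
  have hspan_le : span {x * x} ≤ M := (span_singleton_le_iff_mem M).2 (M.mul_mem_left x hxM)
  -- `span {x * x} = M ∋ x` gives `x = c * x * x`, so `c * x = 1` in the domain `A`
  have hspan : span {x * x} = M :=
    hM.2.2 _ (by simpa [span_singleton_eq_bot] using hxx) (ne_top_of_le_ne_top hM.2.1 hspan_le)
  obtain ⟨c, hc⟩ := mem_span_singleton'.1 (hspan ▸ hxM)
  have h1 : 1 - c * x = 0 := by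
    have : x * (1 - c * x) ∈ (⊥ : Ideal A) := by rw [mem_bot]; linear_combination -hc
    exact (hbot.mem_or_mem this).resolve_left hx0
  exact hM.2.1 ((eq_top_iff_one M).2 (sub_eq_zero.1 h1 ▸ M.mul_mem_left c hxM))

theorem eq_of_isPrime {P : Ideal A} (hP : P.IsPrime) : P = M :=
  hM.2.2 P (fun h => hM.not_isPrime_bot (h ▸ hP)) hP.ne_top

end IsUniqueNontrivial

end Ideal

section Product

open Finset
open Ideal (piOrderIso)

variable {n : ℕ} {R : Fin n → Type*} [∀ i, CommRing (R i)]

theorem piOrderIso_coordIdeal (p : Fin n) (K : Ideal (R p)) :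
    piOrderIso (coordIdeal R p K) = Function.update ⊤ p K := by
  have : coordIdeal R p K = piOrderIso.symm (Function.update ⊤ p K) := by
    ext f
    change f p ∈ K ↔ ∀ i, f i ∈ Function.update (⊤ : ∀ i, Ideal (R i)) p K i
    rw [Function.forall_update_iff (p := fun i (I : Ideal (R i)) => f i ∈ I)]
    simp
  rw [this, OrderIso.apply_symm_apply]

theorem eq_coordIdeal_of_forall_ne {I : Ideal (∀ i, R i)} {p : Fin n}
    (h : ∀ i, i ≠ p → piOrderIso I i = ⊤) :
    I = coordIdeal R p (piOrderIso I p) :=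
  piOrderIso.injective <| by
    rw [piOrderIso_coordIdeal]; exact Function.eq_update_iff.2 ⟨rfl, h⟩

theorem eq_coordIdeal_inf_coordIdeal {I : Ideal (∀ i, R i)} {p k : Fin n} (hk : k ≠ p)
    (h : ∀ i, i ≠ p → i ≠ k → piOrderIso I i = ⊤) :
    I = coordIdeal R p (piOrderIso I p) ⊓ coordIdeal R k (piOrderIso I k) :=
  piOrderIso.injective <| by
    rw [map_inf, piOrderIso_coordIdeal, piOrderIso_coordIdeal]
    funext i
    by_cases hip : i = p
    · subst hip; simp [hk.symm]
    by_cases hik : i = k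
    · subst hik; simp [hip]
    · simp [hip, hik, h i hip hik]

theorem exists_eq_coordIdeal_of_isPrime {M : ∀ i, Ideal (R i)}
    (hM : ∀ i, (M i).IsUniqueNontrivial) {P : Ideal (∀ i, R i)} (hP : P.IsPrime) :
    ∃ p, P = coordIdeal R p (M p) := by
  obtain ⟨p, Q, hQ⟩ := PrimeSpectrum.exists_comap_evalRingHom_eq ⟨P, hP⟩
  refine ⟨p, ?_⟩
  rw [← (hM p).eq_of_isPrime Q.isPrime]
  exact (congrArg PrimeSpectrum.asIdeal hQ).symm

open Classical in
noncomputable def properCoords (I : Ideal (∀ i, R i)) : Finset (Fin n) :=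
  {i | piOrderIso I i ≠ ⊤}

theorem mem_properCoords {I : Ideal (∀ i, R i)} {i : Fin n} :
    i ∈ properCoords I ↔ piOrderIso I i ≠ ⊤ := by
  simp [properCoords]

theorem properCoords_nonempty {I : Ideal (∀ i, R i)} (hI : I ≠ ⊤) :
    (properCoords I).Nonempty := by
  by_contra! h
  refine hI ((map_eq_top_iff piOrderIso).1 (funext fun i => ?_))
  by_contra hi
  simpa [h] using mem_properCoords.2 hi

theorem piOrderIso_apply_sup_of_sup_eq {I J : Ideal (∀ i, R i)} {p : Fin n} {K : Ideal (R p)}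
    (h : I ⊔ J = coordIdeal R p K) (i : Fin n) :
    piOrderIso I i ⊔ piOrderIso J i = Function.update (⊤ : ∀ i, Ideal (R i)) p K i := by
  rw [← piOrderIso_coordIdeal, ← h, map_sup, Pi.sup_apply]

theorem properCoords_inter_of_sup_eq {M : ∀ i, Ideal (R i)} (hM : ∀ i, (M i).IsUniqueNontrivial)
    {I J : Ideal (∀ i, R i)} {p : Fin n} (h : I ⊔ J = coordIdeal R p (M p)) :
    properCoords I ∩ properCoords J = {p} := by
  ext i
  have hsup := piOrderIso_apply_sup_of_sup_eq h i
  simp only [Finset.mem_inter, mem_properCoords, Finset.mem_singleton]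
  by_cases hip : i = p
  · subst hip
    rw [Function.update_self] at hsup
    simp only [iff_true]
    constructor <;> intro htop <;> simp [htop, (hM i).2.1.symm] at hsup
  · rw [Function.update_of_ne hip, Pi.top_apply, (hM i).sup_eq_top_iff] at hsup
    tauto

theorem eq_coordIdeal_of_erase_properCoords_eq_empty {I : Ideal (∀ i, R i)} {p : Fin n}
    (h : (properCoords I).erase p = ∅) : I = coordIdeal R p (piOrderIso I p) :=
  eq_coordIdeal_of_forall_ne fun i hip => by
    by_contra hi
    simpa [h] using mem_erase.2 ⟨hip, mem_properCoords.2 hi⟩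

variable {M : ∀ i, Ideal (R i)}

theorem exists_forall_sup_eq_coordIdeal (hM : ∀ i, (M i).IsUniqueNontrivial)
    {S : Finset (Ideal (∀ i, R i))} (hcard : n < #S) (htop : ∀ X ∈ S, X ≠ ⊤)
    (hadj : ∀ X ∈ S, ∀ Y ∈ S, X ≠ Y → ∃ q, X ⊔ Y = coordIdeal R q (M q)) :
    ∃ p, ∀ X ∈ S, ∀ Y ∈ S, X ≠ Y → X ⊔ Y = coordIdeal R p (M p) := by
  obtain ⟨p, hp⟩ := exists_forall_mem_of_pairwise_card_inter_eq_one
    (fun X : S => properCoords X.1) (fun X => properCoords_nonempty (htop X.1 X.2))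
    (fun X Y hXY => by
      obtain ⟨q, hq⟩ := hadj X.1 X.2 Y.1 Y.2 (Subtype.coe_ne_coe.2 hXY)
      simp [properCoords_inter_of_sup_eq hM hq])
    (by simpa using hcard)
  refine ⟨p, fun X hX Y hY hXY => ?_⟩
  obtain ⟨q, hq⟩ := hadj X hX Y hY hXY
  have hpq : p ∈ properCoords X ∩ properCoords Y := mem_inter.2 ⟨hp ⟨X, hX⟩, hp ⟨Y, hY⟩⟩
  rw [properCoords_inter_of_sup_eq hM hq, mem_singleton] at hpq
  rwa [hpq]

section Star

variable {S : Finset (Ideal (∀ i, R i))} {p : Fin n}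

open Classical in
/-- When all pairwise sums in a family are `Mₚ × ∏_{i ≠ p} Rᵢ`, this encodes a member by its
least proper coordinate other than `p`, or, if it has none, by `none` or `some p` according as
its `p`-th coordinate is `⊥` or `Mₚ`. The encoding is injective on such a family. -/
noncomputable def starKey (p : Fin n) (X : Ideal (∀ i, R i)) : Option (Fin n) :=
  if h : ((properCoords X).erase p).Nonempty then some (((properCoords X).erase p).min' h)
  else if piOrderIso X p = ⊥ then none else some p

theorem mem_erase_properCoords_of_starKey_eq_some {X : Ideal (∀ i, R i)} {k : Fin n}
    (h : starKey p X = some k) (hk : k ≠ p) : k ∈ (properCoords X).erase p := by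
  unfold starKey at h
  split_ifs at h with hne
  · exact Option.some_inj.1 h ▸ min'_mem _ hne
  · exact absurd (Option.some_inj.1 h).symm hk

theorem erase_properCoords_eq_empty_of_starKey_eq {X : Ideal (∀ i, R i)} {o : Option (Fin n)}
    (h : starKey p X = o) (ho : o = none ∨ o = some p) : (properCoords X).erase p = ∅ := by
  by_contra hne
  have hne := nonempty_iff_ne_empty.2 hne
  unfold starKey at h
  rw [dif_pos hne] at h
  rcases ho with rfl | rfl
  · exact Option.some_ne_none _ h
  · exact (mem_erase.1 (min'_mem _ hne)).1 (Option.some_inj.1 h)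

theorem eq_coordIdeal_of_starKey_eq_none {X : Ideal (∀ i, R i)} (h : starKey p X = none) :
    X = coordIdeal R p ⊥ := by
  have hbot : piOrderIso X p = ⊥ := by
    unfold starKey at h
    split_ifs at h with _ hbot
    exact hbot
  rw [eq_coordIdeal_of_erase_properCoords_eq_empty
    (erase_properCoords_eq_empty_of_starKey_eq h (.inl rfl)), hbot]

variable (hM : ∀ i, (M i).IsUniqueNontrivial)
  (hp : ∀ X ∈ S, ∀ Y ∈ S, X ≠ Y → X ⊔ Y = coordIdeal R p (M p))
include hM hp

theorem disjoint_erase_properCoords {X Y : Ideal (∀ i, R i)} (hX : X ∈ S) (hY : Y ∈ S)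
    (hXY : X ≠ Y) : Disjoint ((properCoords X).erase p) ((properCoords Y).erase p) := by
  rw [disjoint_iff_inter_eq_empty, erase_inter, inter_erase, erase_idem,
    properCoords_inter_of_sup_eq hM (hp X hX Y hY hXY), erase_singleton]

theorem piOrderIso_apply_ne_top_of_mem (hS : 1 < #S) {X : Ideal (∀ i, R i)} (hX : X ∈ S) :
    piOrderIso X p ≠ ⊤ := by
  obtain ⟨Y, hY, hYX⟩ := exists_mem_ne hS X
  have := properCoords_inter_of_sup_eq hM (hp X hX Y hY hYX.symm)
  exact mem_properCoords.1 (mem_of_mem_inter_left (this ▸ mem_singleton_self p))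

theorem eq_coordIdeal_of_starKey_eq_some_self (hS : 1 < #S) {X : Ideal (∀ i, R i)} (hX : X ∈ S)
    (h : starKey p X = some p) : X = coordIdeal R p (M p) := by
  have hbot : piOrderIso X p ≠ ⊥ := by
    unfold starKey at h
    split_ifs at h with hne hbot
    · exact absurd (Option.some_inj.1 h) (mem_erase.1 (min'_mem _ hne)).1
    · exact hbot
  rw [eq_coordIdeal_of_erase_properCoords_eq_empty
    (erase_properCoords_eq_empty_of_starKey_eq h (.inr rfl)),
    (hM p).2.2 _ hbot (piOrderIso_apply_ne_top_of_mem hM hp hS hX)]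

theorem starKey_injOn (hS : 1 < #S) : Set.InjOn (starKey p) (S : Set (Ideal (∀ i, R i))) := by
  intro X hX Y hY hXY
  cases hkey : starKey p X with
  | none =>
    rw [eq_coordIdeal_of_starKey_eq_none hkey,
      eq_coordIdeal_of_starKey_eq_none (hXY.symm.trans hkey)]
  | some k =>
    by_cases hk : k = p
    · subst hk
      rw [eq_coordIdeal_of_starKey_eq_some_self hM hp hS hX hkey,
        eq_coordIdeal_of_starKey_eq_some_self hM hp hS hY (hXY.symm.trans hkey)]
    · by_contra hne
      exact disjoint_left.1 (disjoint_erase_properCoords hM hp hX hY hne)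
        (mem_erase_properCoords_of_starKey_eq_some hkey hk)
        (mem_erase_properCoords_of_starKey_eq_some (hXY.symm.trans hkey) hk)

variable (hS : #S = n + 1)
include hS

theorem exists_mem_starKey_eq (o : Option (Fin n)) : ∃ X ∈ S, starKey p X = o := by
  have hS' : 1 < #S := hS ▸ Nat.succ_lt_succ p.pos
  obtain ⟨X, hX, hXo⟩ := surj_on_of_inj_on_of_card_le (fun X _ => starKey p X)
    (fun _ _ => mem_univ _) (fun _ _ hX hY => starKey_injOn hM hp hS' hX hY) (by simp [hS]) o
    (mem_univ o)
  exact ⟨X, hX, hXo.symm⟩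

theorem eq_coordIdeal_inf_of_starKey_eq_some {X : Ideal (∀ i, R i)} (hX : X ∈ S) {k : Fin n}
    (h : starKey p X = some k) (hk : k ≠ p) :
    X = coordIdeal R p (M p) ⊓ coordIdeal R k (piOrderIso X k) := by
  obtain ⟨B, hB, hBkey⟩ := exists_mem_starKey_eq hM hp hS none
  have hXB : X ≠ B := by rintro rfl; simp [hBkey] at h
  have hcenter : piOrderIso X p = M p := by
    have := piOrderIso_apply_sup_of_sup_eq (hp X hX B hB hXB) p
    rwa [eq_coordIdeal_of_starKey_eq_none hBkey, piOrderIso_coordIdeal, Function.update_self,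
      Function.update_self, sup_bot_eq] at this
  rw [← hcenter]
  refine eq_coordIdeal_inf_coordIdeal hk fun i hip hik => ?_
  by_contra hi
  obtain ⟨Y, hY, hYkey⟩ := exists_mem_starKey_eq hM hp hS (some i)
  obtain rfl : X = Y := by
    by_contra hXY
    exact disjoint_left.1 (disjoint_erase_properCoords hM hp hX hY hXY)
      (mem_erase.2 ⟨hip, mem_properCoords.2 hi⟩)
      (mem_erase_properCoords_of_starKey_eq_some hYkey hip)
  rw [hYkey] at h
  exact hik (Option.some_inj.1 h)

theorem exists_coe_eq_of_forall_sup_eq_coordIdeal :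
    ∃ J : ∀ k, Ideal (R k), (∀ k, k ≠ p → J k = ⊥ ∨ J k = M k) ∧
      (S : Set (Ideal (∀ i, R i))) =
        insert (coordIdeal R p (M p)) (insert (coordIdeal R p ⊥)
          ((fun k => coordIdeal R p (M p) ⊓ coordIdeal R k (J k)) '' {k | k ≠ p})) := by
  choose X hXS hXkey using exists_mem_starKey_eq hM hp hS
  have hS' : 1 < #S := hS ▸ Nat.succ_lt_succ p.pos
  have hXsome : ∀ k, k ≠ p →
      X (some k) = coordIdeal R p (M p) ⊓ coordIdeal R k (piOrderIso (X (some k)) k) :=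
    fun k hk => eq_coordIdeal_inf_of_starKey_eq_some hM hp hS (hXS _) (hXkey _) hk
  refine ⟨fun k => piOrderIso (X (some k)) k, fun k hk => ?_, ?_⟩
  · have hne := (mem_erase.1 (mem_erase_properCoords_of_starKey_eq_some (hXkey (some k)) hk)).2
    rcases (hM k).eq_bot_or_eq_or_eq_top (piOrderIso (X (some k)) k) with h | h | h
    exacts [.inl h, .inr h, absurd h (mem_properCoords.1 hne)]
  ext Y
  simp only [mem_coe, Set.mem_insert_iff, Set.mem_image, Set.mem_ofPred_eq]
  constructor
  · intro hY
    obtain ⟨o, hYo⟩ : ∃ o, starKey p Y = o := ⟨_, rfl⟩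
    obtain rfl : Y = X o := starKey_injOn hM hp hS' hY (hXS o) (hYo.trans (hXkey o).symm)
    rcases o with _ | k
    · exact .inr (.inl (eq_coordIdeal_of_starKey_eq_none (hXkey none)))
    by_cases hk : k = p
    · subst hk
      exact .inl (eq_coordIdeal_of_starKey_eq_some_self hM hp hS' (hXS _) (hXkey _))
    · exact .inr (.inr ⟨k, hk, (hXsome k hk).symm⟩)
  · rintro (rfl | rfl | ⟨k, hk, rfl⟩)
    · rw [← eq_coordIdeal_of_starKey_eq_some_self hM hp hS' (hXS _) (hXkey (some p))]
      exact hXS _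
    · rw [← eq_coordIdeal_of_starKey_eq_none (hXkey none)]
      exact hXS _
    · rw [← hXsome k hk]
      exact hXS _

end Star

theorem PIS.exists_sup_eq_coordIdeal_of_adj (hM : ∀ i, (M i).IsUniqueNontrivial)
    {X Y : {I : Ideal (∀ i, R i) // I ≠ ⊥ ∧ I ≠ ⊤}} (h : (PIS (∀ i, R i)).Adj X Y) :
    ∃ p, X.1 ⊔ Y.1 = coordIdeal R p (M p) :=
  exists_eq_coordIdeal_of_isPrime hM h.2

end Product

theorem pis_nClique_classification_of_uniqueIdeal_general {n : ℕ}
    (R : Fin n → Type*) [∀ i, CommRing (R i)] (M : ∀ i, Ideal (R i))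
    (hM : ∀ i, M i ≠ ⊥ ∧ M i ≠ ⊤ ∧
      ∀ I : Ideal (R i), I ≠ ⊥ → I ≠ ⊤ → I = M i)
    (s : Finset {I : Ideal (∀ i, R i) // I ≠ ⊥ ∧ I ≠ ⊤})
    (hs : (PIS (∀ i, R i)).IsNClique (n + 1) s) :
    ∃ p : Fin n, ∃ J : ∀ k, Ideal (R k),
      (∀ k, k ≠ p → J k = ⊥ ∨ J k = M k) ∧
      Subtype.val '' (s : Set {I : Ideal (∀ i, R i) // I ≠ ⊥ ∧ I ≠ ⊤}) =
        insert (coordIdeal R p (M p))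
          (insert (coordIdeal R p ⊥)
            ((fun k => coordIdeal R p (M p) ⊓ coordIdeal R k (J k)) ''
              {k | k ≠ p})) := by
  set S := s.map (Function.Embedding.subtype _)
  have hS : S.card = n + 1 := by simp [S, hs.card_eq]
  have hmem : ∀ X ∈ S, ∃ hX, (⟨X, hX⟩ : {I : Ideal (∀ i, R i) // I ≠ ⊥ ∧ I ≠ ⊤}) ∈ s := by
    simp [S]
  obtain ⟨p, hp⟩ := exists_forall_sup_eq_coordIdeal hM (by omega)
    (fun X hX => (hmem X hX).1.2) fun X hX Y hY hXY => by
      obtain ⟨_, hXs⟩ := hmem X hX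
      obtain ⟨_, hYs⟩ := hmem Y hY
      exact PIS.exists_sup_eq_coordIdeal_of_adj hM (hs.isClique hXs hYs (by simpa using hXY))
  obtain ⟨J, hJ, hSJ⟩ := exists_coe_eq_of_forall_sup_eq_coordIdeal hM hp hS
  exact ⟨p, J, hJ, by rw [← hSJ, Finset.coe_map]; rfl⟩

/-- Classification of cliques of size `n + 1` in `PIS(R)` when each `Rᵢ` is a
local ring with unique nonzero proper ideal `Mᵢ`: up to relabeling
coordinates (choice of `p`), the clique consists of `M_p × ∏ R_i`,
`(0) × ∏ R_i`, and the ideals `M_p × ⋯ × J_k × ⋯` with `J_k ∈ {(0), M_k}`. -/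
theorem pis_nClique_classification_of_uniqueIdeal {n : ℕ} (hn : 2 ≤ n)
    (R : Fin n → Type*) [∀ i, CommRing (R i)] (M : ∀ i, Ideal (R i))
    (hM : ∀ i, M i ≠ ⊥ ∧ M i ≠ ⊤ ∧
      ∀ I : Ideal (R i), I ≠ ⊥ → I ≠ ⊤ → I = M i)
    (s : Finset {I : Ideal (∀ i, R i) // I ≠ ⊥ ∧ I ≠ ⊤})
    (hs : (PIS (∀ i, R i)).IsNClique (n + 1) s) :
    ∃ p : Fin n, ∃ J : ∀ k, Ideal (R k),
      (∀ k, k ≠ p → J k = ⊥ ∨ J k = M k) ∧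
      Subtype.val '' (s : Set {I : Ideal (∀ i, R i) // I ≠ ⊥ ∧ I ≠ ⊤}) =
        insert (coordIdeal R p (M p))
          (insert (coordIdeal R p ⊥)
            ((fun k => coordIdeal R p (M p) ⊓ coordIdeal R k (J k)) ''
              {k | k ≠ p})) :=
  pis_nClique_classification_of_uniqueIdeal_general R M hM s hs
end

section
/- Let R ≅ R₁ × ⋯ × Rₙ (n ≥ 2), where each Rᵢ is a local ring with unique nonzero proper ideal. Then the strong metric dimension of PIS(R) equals 3ⁿ − n − 3. -/
open SimpleGraph

/-- `w` strongly resolves `u` and `v`. -/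
def StronglyResolves {V : Type*} (G : SimpleGraph V) (w u v : V) : Prop :=
  G.dist w v = G.dist w u + G.dist u v ∨ G.dist w u = G.dist w v + G.dist v u

/-- A strong resolving set. -/
def IsStrongResolvingSet {V : Type*} (G : SimpleGraph V) (S : Set V) : Prop :=
  ∀ u v : V, u ≠ v → ∃ w ∈ S, StronglyResolves G w u v

/-- The strong metric dimension. -/
noncomputable def sdim {V : Type*} (G : SimpleGraph V) : ℕ∞ :=
  ⨅ S : {S : Set V // IsStrongResolvingSet G S}, S.1.encard

/-!
Each `Rᵢ` has exactly the ideals `0 < Mᵢ < Rᵢ`, so an ideal of `R = ∏ Rᵢ` is a code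
`f : Fin n → Fin 3`; sums of ideals become pointwise maxima, and the prime ideals are the codes
with one coordinate `1` and all others `2`.  In the resulting graph two distinct vertices are
adjacent or have a common neighbour, so a set is strongly resolving exactly when its complement
is a clique whose vertices are pairwise told apart by adjacency to some outside vertex.

Cliques have at most `n + 1` vertices: give each code the indicator vector of its coordinates
`≠ 2`, extended by one entry `t` recording whether it contains a `0`.  On a clique the Gram matrix
is `J + t tᵀ + diag(d)` with `d ≥ 0`, and the vertices with `d = 0` (a single coordinate `≠ 2`)
are at most two, with different `t`, so the vectors are linearly independent.  The clique
`{c} ∪ {c with coordinate j set to 0}`, `c = (1, 2, …, 2)`, attains the bound; its pairs are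
separated by the codes with a single `1` and one further code.  Hence
`sdim = (3ⁿ - 2) - (n + 1)`.
-/

open Function Finset

noncomputable def finThreeOrderIso {β : Type*} [PartialOrder β] [BoundedOrder β] {m : β}
    (hm : m ≠ ⊥ ∧ m ≠ ⊤ ∧ ∀ x, x ≠ ⊥ → x ≠ ⊤ → x = m) : Fin 3 ≃o β :=
  StrictMono.orderIsoOfSurjective ![⊥, m, ⊤]
    (Fin.strictMono_iff_lt_succ.mpr fun i => by
      fin_cases i
      · exact bot_lt_iff_ne_bot.mpr hm.1
      · exact lt_top_iff_ne_top.mpr hm.2.1)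
    fun x => by
      by_cases h₀ : x = ⊥
      · exact ⟨0, h₀.symm⟩
      by_cases h₂ : x = ⊤
      · exact ⟨2, h₂.symm⟩
      exact ⟨1, (hm.2.2 x h₀ h₂).symm⟩

lemma finThreeOrderIso_one {β : Type*} [PartialOrder β] [BoundedOrder β] {m : β}
    (hm : m ≠ ⊥ ∧ m ≠ ⊤ ∧ ∀ x, x ≠ ⊥ → x ≠ ⊤ → x = m) : finThreeOrderIso hm 1 = m := rfl

namespace Ideal

/-- `0` is not prime: a domain with finitely many ideals is Artinian, hence a field. -/
lemma isPrime_iff_eq_of_forall_eq {A : Type*} [CommRing A] {M : Ideal A}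
    (hM : M ≠ ⊥ ∧ M ≠ ⊤ ∧ ∀ I : Ideal A, I ≠ ⊥ → I ≠ ⊤ → I = M) {I : Ideal A} :
    I.IsPrime ↔ I = M := by
  refine ⟨fun hI => by_contra fun hne => ?_, ?_⟩
  · obtain rfl : I = ⊥ := by_contra fun h => hne (hM.2.2 I h hI.ne_top)
    have := IsDomain.of_bot_isPrime A
    have := Finite.of_equiv _ (finThreeOrderIso hM).toEquiv
    have hmax := Ring.isField_iff_maximal_bot.mp (IsArtinianRing.isField_of_isDomain A)
    exact hM.1 (hmax.eq_of_le hM.2.1 bot_le).symm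
  · rintro rfl
    refine IsMaximal.isPrime (isMaximal_def.mpr ⟨hM.2.1, fun J hJ => by_contra fun hJ' => ?_⟩)
    exact hJ.ne' (hM.2.2 J (ne_bot_of_gt hJ) hJ')

variable {ι : Type*} {R : ι → Type*} [∀ i, CommRing (R i)]

theorem isPrime_pi_iff [Finite ι] {I : ∀ i, Ideal (R i)} :
    (pi I).IsPrime ↔ ∃ i, (I i).IsPrime ∧ ∀ j ≠ i, I j = ⊤ := by
  classical
  constructor
  · intro hI
    obtain ⟨i, ⟨q, hq⟩, h⟩ := PrimeSpectrum.exists_comap_evalRingHom_eq ⟨pi I, hI⟩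
    have hpi : comap (Pi.evalRingHom R i) q = pi I := congrArg PrimeSpectrum.asIdeal h
    have hI_eq (j : ι) : I j = map (Pi.evalRingHom R j) (comap (Pi.evalRingHom R i) q) := by
      rw [hpi, map_evalRingHom_pi]
    refine ⟨i, ?_, fun j hj => ?_⟩
    · rwa [hI_eq, map_comap_of_surjective _ (surjective_eval i)]
    · rw [hI_eq, eq_top_iff_one]
      simpa using mem_map_of_mem (Pi.evalRingHom R j)
        (show Pi.single j 1 ∈ comap (Pi.evalRingHom R i) q by simp [hj.symm])
  · rintro ⟨i, hi, htop⟩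
    have : pi I = comap (Pi.evalRingHom R i) (I i) := by
      ext x
      refine ⟨fun hx => hx i, fun hx j => ?_⟩
      rcases eq_or_ne j i with rfl | hj
      · exact hx
      · simp [htop j hj]
    rw [this]
    exact comap_isPrime _ _

end Ideal

namespace SimpleGraph

variable {V V' : Type*} {G : SimpleGraph V} {G' : SimpleGraph V'}

lemma Iso.dist_le (e : G ≃g G') (u v : V) : G'.dist (e u) (e v) ≤ G.dist u v := by
  by_cases h : G.Reachable u v
  · obtain ⟨p, hp⟩ := h.exists_walk_length_eq_dist
    calc G'.dist (e u) (e v) ≤ (p.map e.toHom).length := SimpleGraph.dist_le _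
      _ = G.dist u v := by rw [Walk.length_map, hp]
  · rw [dist_eq_zero_of_not_reachable (Iso.reachable_iff.not.mpr h)]
    exact Nat.zero_le _

lemma Iso.dist_eq (e : G ≃g G') (u v : V) : G'.dist (e u) (e v) = G.dist u v :=
  (e.dist_le u v).antisymm <| by simpa using e.symm.dist_le (e u) (e v)

lemma IsStrongResolvingSet.image {S : Set V} (hS : IsStrongResolvingSet G S) (e : G ≃g G') :
    IsStrongResolvingSet G' (e '' S) := by
  intro u v huv
  obtain ⟨w, hwS, hw⟩ := hS (e.symm u) (e.symm v) (by simpa using huv)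
  refine ⟨e w, Set.mem_image_of_mem e hwS, ?_⟩
  simpa [StronglyResolves, ← e.dist_eq w, ← e.dist_eq (e.symm u), ← e.dist_eq (e.symm v)] using hw

lemma sdim_le_of_iso (e : G ≃g G') : sdim G' ≤ sdim G :=
  le_iInf fun S => (iInf_le _ ⟨e '' S.1, S.2.image e⟩).trans
    (e.injective.encard_image S.1).le

lemma sdim_congr (e : G ≃g G') : sdim G = sdim G' :=
  (sdim_le_of_iso e.symm).antisymm (sdim_le_of_iso e)

section DiameterTwo

variable (hG : ∀ u v, u ≠ v → G.Adj u v ∨ ∃ w, G.Adj u w ∧ G.Adj w v)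
include hG

lemma dist_le_two_of_forall_adj_or_exists_adj_adj (u v : V) : G.dist u v ≤ 2 := by
  rcases eq_or_ne u v with rfl | huv
  · simp
  rcases hG u v huv with h | ⟨w, huw, hwv⟩
  · simp [dist_eq_one_iff_adj.mpr h]
  · simpa using dist_le (huw.toWalk.append hwv.toWalk)

lemma reachable_of_forall_adj_or_exists_adj_adj (u v : V) : G.Reachable u v := by
  rcases eq_or_ne u v with rfl | huv
  · rfl
  rcases hG u v huv with h | ⟨w, huw, hwv⟩
  · exact h.reachable
  · exact huw.reachable.trans hwv.reachable

lemma dist_eq_two_of_forall_adj_or_exists_adj_adj {u v : V} (huv : u ≠ v) (h : ¬G.Adj u v) :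
    G.dist u v = 2 :=
  le_antisymm (dist_le_two_of_forall_adj_or_exists_adj_adj hG u v)
    ((reachable_of_forall_adj_or_exists_adj_adj hG u v).one_lt_dist_of_ne_of_not_adj huv h)

lemma isClique_compl_of_isStrongResolvingSet {S : Set V} (hS : IsStrongResolvingSet G S) :
    G.IsClique Sᶜ := by
  intro u hu v hv huv
  by_contra hadj
  have hpos {x y : V} (hxy : x ≠ y) : 0 < G.dist x y :=
    (reachable_of_forall_adj_or_exists_adj_adj hG x y).pos_dist_of_ne hxy
  obtain ⟨w, hwS, hw⟩ := hS u v huv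
  have := hpos (ne_of_mem_of_not_mem hwS hu)
  have := hpos (ne_of_mem_of_not_mem hwS hv)
  have := dist_le_two_of_forall_adj_or_exists_adj_adj hG w u
  have := dist_le_two_of_forall_adj_or_exists_adj_adj hG w v
  rw [StronglyResolves, dist_eq_two_of_forall_adj_or_exists_adj_adj hG huv hadj,
    dist_eq_two_of_forall_adj_or_exists_adj_adj hG huv.symm (fun h => hadj h.symm)] at hw
  omega

lemma isStrongResolvingSet_of_isClique_compl {S : Set V} (hclique : G.IsClique Sᶜ)
    (hsep : ∀ u ∉ S, ∀ v ∉ S, u ≠ v → ∃ w ∈ S, Xor (G.Adj w u) (G.Adj w v)) :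
    IsStrongResolvingSet G S := by
  intro u v huv
  by_cases hu : u ∈ S
  · exact ⟨u, hu, Or.inl (by simp)⟩
  by_cases hv : v ∈ S
  · exact ⟨v, hv, Or.inr (by simp)⟩
  have hadj : G.Adj u v := hclique hu hv huv
  obtain ⟨w, hwS, hw | hw⟩ := hsep u hu v hv huv
  · refine ⟨w, hwS, Or.inl ?_⟩
    rw [dist_eq_two_of_forall_adj_or_exists_adj_adj hG (ne_of_mem_of_not_mem hwS hv) hw.2,
      dist_eq_one_iff_adj.mpr hw.1, dist_eq_one_iff_adj.mpr hadj]
  · refine ⟨w, hwS, Or.inr ?_⟩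
    rw [dist_eq_two_of_forall_adj_or_exists_adj_adj hG (ne_of_mem_of_not_mem hwS hu) hw.2,
      dist_eq_one_iff_adj.mpr hw.1, dist_eq_one_iff_adj.mpr hadj.symm]

variable [Fintype V] [DecidableEq V]

lemma card_sub_le_sdim {k : ℕ} (hk : ∀ s : Finset V, G.IsClique (s : Set V) → #s ≤ k) :
    ((Fintype.card V - k : ℕ) : ℕ∞) ≤ sdim G := by
  classical
  refine le_iInf fun ⟨S, hS⟩ => ?_
  change _ ≤ S.encard
  have hcompl := hk S.toFinsetᶜ (by simpa using isClique_compl_of_isStrongResolvingSet hG hS)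
  rw [card_compl] at hcompl
  rw [Set.encard_eq_coe_toFinset_card, Nat.cast_le]
  omega

lemma sdim_le_card_sub (C : Finset V) (hC : G.IsClique (C : Set V))
    (hsep : ∀ u ∈ C, ∀ v ∈ C, u ≠ v → ∃ w ∉ C, Xor (G.Adj w u) (G.Adj w v)) :
    sdim G ≤ (Fintype.card V - #C : ℕ) := by
  have hS : IsStrongResolvingSet G (Cᶜ : Finset V) :=
    isStrongResolvingSet_of_isClique_compl hG (by simpa using hC) (by simpa using hsep)
  refine (iInf_le _ ⟨_, hS⟩).trans ?_
  rw [Set.encard_coe_eq_coe_finsetCard, card_compl]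

end DiameterTwo

end SimpleGraph

open Matrix in
lemma sum_sq_add_sum_mul_sq_add_sum_eq_zero {κ α : Type*} [Fintype κ] [Fintype α]
    [DecidableEq κ] {w : κ → α → ℚ} {t d : κ → ℚ}
    (hw : ∀ i j, w i ⬝ᵥ w j = 1 + t i * t j + if i = j then d i else 0)
    {c : κ → ℚ} (hc : ∑ i, c i • w i = 0) :
    (∑ i, c i) ^ 2 + (∑ i, c i * t i) ^ 2 + ∑ i, c i ^ 2 * d i = 0 := by
  have h : (∑ i, c i • w i) ⬝ᵥ (∑ j, c j • w j) = 0 := by rw [hc, zero_dotProduct]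
  simp only [sum_dotProduct, dotProduct_sum, smul_dotProduct, dotProduct_smul, hw,
    smul_eq_mul] at h
  rw [← h, sq, sq, sum_mul_sum, sum_mul_sum, ← sum_add_distrib, ← sum_add_distrib]
  refine sum_congr rfl fun i _ => ?_
  simp only [mul_add, sum_add_distrib, mul_ite, mul_zero, sum_ite_eq', mem_univ, if_true,
    mul_sum]
  ring_nf

lemma Fin.le_one_of_ne_top : ∀ a : Fin 3, a ≠ ⊤ → a ≤ 1 := by decide

/-- The code of a prime ideal of `∏ Rᵢ`, with `0, 1, 2` standing for `0, Mᵢ, Rᵢ`. -/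
def IsPrimeCode {ι : Type*} (h : ι → Fin 3) : Prop :=
  ∃ i, h i = 1 ∧ ∀ j ≠ i, h j = ⊤

section IsPrimeCode

variable {ι : Type*}

lemma IsPrimeCode.ne_bot {h : ι → Fin 3} (hh : IsPrimeCode h) (j : ι) : h j ≠ ⊥ := by
  obtain ⟨i, hi, hi'⟩ := hh
  rcases eq_or_ne j i with rfl | hj
  · simp [hi, (by decide : (1 : Fin 3) ≠ ⊥)]
  · simp [hi' j hj, (by decide : (⊤ : Fin 3) ≠ ⊥)]

lemma not_isPrimeCode_top : ¬IsPrimeCode (⊤ : ι → Fin 3) :=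
  fun ⟨_, hi, _⟩ => (by decide : (⊤ : Fin 3) ≠ 1) hi

lemma IsPrimeCode.card_filter_ne_top [Fintype ι] {h : ι → Fin 3} (hh : IsPrimeCode h) :
    #{i | h i ≠ ⊤} = 1 := by
  obtain ⟨i, hi, hj⟩ := hh
  refine card_eq_one.mpr ⟨i, eq_singleton_iff_unique_mem.mpr ⟨?_, fun j hj' => ?_⟩⟩
  · simp [hi, (by decide : (1 : Fin 3) ≠ ⊤)]
  · by_contra hji
    exact (mem_filter.mp hj').2 (hj j hji)

lemma isPrimeCode_update_top_one [DecidableEq ι] (i : ι) :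
    IsPrimeCode (update (⊤ : ι → Fin 3) i 1) :=
  ⟨i, by simp, fun j hj => by simp [hj]⟩

end IsPrimeCode

abbrev CodeVertex (ι : Type*) := {f : ι → Fin 3 // f ≠ ⊥ ∧ f ≠ ⊤}

/-- The prime ideal sum graph of `∏ Rᵢ`, read on codes (see `pisIsoCodeGraph`). -/
def codeGraph (ι : Type*) : SimpleGraph (CodeVertex ι) where
  Adj f g := f ≠ g ∧ IsPrimeCode (f.1 ⊔ g.1)
  symm := ⟨fun f g h => ⟨h.1.symm, sup_comm f.1 g.1 ▸ h.2⟩⟩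
  loopless := ⟨fun _ h => h.1 rfl⟩

namespace codeGraph

section Adjacency

variable {ι : Type*}

@[simp] lemma adj_iff {f g : CodeVertex ι} :
    (codeGraph ι).Adj f g ↔ f ≠ g ∧ IsPrimeCode (f.1 ⊔ g.1) := Iff.rfl

variable [DecidableEq ι]

lemma sup_update_top_one {f : ι → Fin 3} {i : ι} (hf : f i ≠ ⊤) :
    f ⊔ update ⊤ i 1 = update ⊤ i 1 := by
  refine sup_eq_right.mpr fun j => ?_
  rcases eq_or_ne j i with rfl | hj
  · simpa using Fin.le_one_of_ne_top _ hf
  · simp [hj]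

lemma sup_update_update_top_one {f : ι → Fin 3} {a b : ι} (hab : a ≠ b) (ha : f a ≠ ⊤)
    (hb : f b = ⊤) : f ⊔ update (update ⊤ a 1) b 1 = update ⊤ a 1 := by
  funext j
  rcases eq_or_ne j b with rfl | hjb
  · simp [hb, hab.symm]
  · rw [Pi.sup_apply, update_of_ne hjb]
    exact congrFun (sup_update_top_one ha) j

def primeVertex (i : ι) : CodeVertex ι :=
  ⟨update ⊤ i 1, fun h => (by decide : (1 : Fin 3) ≠ ⊥) (by simpa using congrFun h i),
    fun h => (by decide : (1 : Fin 3) ≠ ⊤) (by simpa using congrFun h i)⟩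

@[simp] lemma coe_primeVertex (i : ι) : (primeVertex i).1 = update ⊤ i 1 := rfl

lemma adj_primeVertex {f : CodeVertex ι} {j : ι} (hf : f.1 j ≠ ⊤)
    (hne : primeVertex j ≠ f) : (codeGraph ι).Adj (primeVertex j) f :=
  ⟨hne, by
    rw [coe_primeVertex, sup_comm, sup_update_top_one hf]
    exact isPrimeCode_update_top_one j⟩

lemma not_adj_primeVertex {f : CodeVertex ι} {j : ι} (hf : f.1 j = ⊤) :
    ¬(codeGraph ι).Adj (primeVertex j) f := by
  rintro ⟨-, h⟩
  refine not_isPrimeCode_top (cast (congrArg IsPrimeCode (funext fun x => ?_)) h)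
  rcases eq_or_ne x j with rfl | hx
  · simp [hf]
  · simp [hx]

lemma adj_or_exists_adj_adj (f g : CodeVertex ι) (hfg : f ≠ g) :
    (codeGraph ι).Adj f g ∨ ∃ w, (codeGraph ι).Adj f w ∧ (codeGraph ι).Adj w g := by
  by_cases hcommon : ∃ c, f.1 c ≠ ⊤ ∧ g.1 c ≠ ⊤
  · obtain ⟨c, hfc, hgc⟩ := hcommon
    by_cases hfp : primeVertex c = f
    · subst hfp
      exact .inl (adj_primeVertex hgc hfg)
    by_cases hgp : primeVertex c = g
    · subst hgp
      exact .inl (adj_primeVertex hfc hfg.symm).symm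
    exact .inr ⟨primeVertex c, (adj_primeVertex hfc hfp).symm, adj_primeVertex hgc hgp⟩
  push Not at hcommon
  obtain ⟨a, ha⟩ := Function.ne_iff.mp f.2.2
  obtain ⟨b, hb⟩ := Function.ne_iff.mp g.2.2
  simp only [Pi.top_apply] at ha hb
  have hfb : f.1 b = ⊤ := by_contra fun h => hb (hcommon b h)
  have hga : g.1 a = ⊤ := hcommon a ha
  have hab : a ≠ b := fun h => ha (h ▸ hfb)
  have hwa : update (update (⊤ : ι → Fin 3) a 1) b 1 a = 1 := by simp [hab]
  have hwb : update (update (⊤ : ι → Fin 3) a 1) b 1 b = 1 := by simp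
  have h1 : (1 : Fin 3) ≠ ⊤ := by decide
  let w : CodeVertex ι :=
    ⟨update (update ⊤ a 1) b 1,
      fun h => (by decide : (1 : Fin 3) ≠ ⊥) (hwb.symm.trans (congrFun h b)),
      fun h => h1 (hwb.symm.trans (congrFun h b))⟩
  refine .inr ⟨w, ⟨fun h => h1 ?_, ?_⟩, ⟨fun h => h1 ?_, ?_⟩⟩
  · exact hwb.symm.trans ((congrArg (·.1 b) h).symm.trans hfb)
  · rw [sup_update_update_top_one hab ha hfb]
    exact isPrimeCode_update_top_one a
  · exact hwa.symm.trans ((congrArg (·.1 a) h).trans hga)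
  · change IsPrimeCode (update (update ⊤ a 1) b 1 ⊔ g.1)
    rw [sup_comm, update_comm hab, sup_update_update_top_one hab.symm hb hga]
    exact isPrimeCode_update_top_one b

end Adjacency

section CliqueBound

variable {ι : Type*} [Fintype ι]

noncomputable def lowVec (f : ι → Fin 3) : Option ι → ℚ
  | none => if ∃ i, f i = ⊥ then 1 else 0
  | some i => if f i = ⊤ then 0 else 1

open Matrix in
lemma dotProduct_lowVec (f g : ι → Fin 3) :
    lowVec f ⬝ᵥ lowVec g = lowVec f none * lowVec g none + #{i | (f ⊔ g) i ≠ ⊤} := by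
  rw [dotProduct, Fintype.sum_option, card_filter, Nat.cast_sum]
  congr 1
  refine sum_congr rfl fun i _ => ?_
  simp only [lowVec, Pi.sup_apply]
  split_ifs <;> simp_all

lemma eq_top_of_card_filter_ne_top_eq_one {f : ι → Fin 3} (hf : #{i | f i ≠ ⊤} = 1)
    {x j : ι} (hx : f x ≠ ⊤) (hj : j ≠ x) : f j = ⊤ :=
  by_contra fun h => hj (card_le_one.mp hf.le j (by simpa using h) x (by simpa using hx))

/-- Two adjacent codes with a single coordinate `≠ 2` share that coordinate and differ there,
so exactly one of them has a `0`. -/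
lemma exists_eq_bot_iff_not_of_adj {f g : CodeVertex ι}
    (hfg : (codeGraph ι).Adj f g) (hf : #{i | f.1 i ≠ ⊤} = 1) (hg : #{i | g.1 i ≠ ⊤} = 1) :
    (∃ i, f.1 i = ⊥) ↔ ¬∃ i, g.1 i = ⊥ := by
  obtain ⟨hne, x, hx, -⟩ := hfg
  have hlow : f.1 x ≠ ⊤ ∧ g.1 x ≠ ⊤ :=
    (by decide : ∀ a b : Fin 3, a ⊔ b = 1 → a ≠ ⊤ ∧ b ≠ ⊤) _ _ hx
  have hf' (j) (hj : j ≠ x) : f.1 j = ⊤ := eq_top_of_card_filter_ne_top_eq_one hf hlow.1 hj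
  have hg' (j) (hj : j ≠ x) : g.1 j = ⊤ := eq_top_of_card_filter_ne_top_eq_one hg hlow.2 hj
  have hbot {h : ι → Fin 3} (hh : ∀ j ≠ x, h j = ⊤) : (∃ i, h i = ⊥) ↔ h x = ⊥ := by
    refine ⟨fun ⟨i, hi⟩ => ?_, fun h => ⟨x, h⟩⟩
    rcases eq_or_ne i x with rfl | hix
    · exact hi
    · exact absurd (hh i hix ▸ hi) (by decide)
  have hx_ne : f.1 x ≠ g.1 x := fun h => hne <| Subtype.ext <| funext fun j => by
    rcases eq_or_ne j x with rfl | hj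
    · exact h
    · rw [hf' j hj, hg' j hj]
  rw [hbot hf', hbot hg']
  exact (by decide : ∀ a b : Fin 3, a ≠ ⊤ → b ≠ ⊤ → a ≠ b → (a = ⊥ ↔ ¬b = ⊥))
    _ _ hlow.1 hlow.2 hx_ne

variable {s : Finset (CodeVertex ι)}
  (hs : (codeGraph ι).IsClique (s : Set (CodeVertex ι)))
include hs

open Matrix in
lemma dotProduct_lowVec_of_isClique (f g : s) :
    lowVec f.1.1 ⬝ᵥ lowVec g.1.1 = 1 + lowVec f.1.1 none * lowVec g.1.1 none +
      if f = g then (#{i | f.1.1 i ≠ ⊤} - 1 : ℚ) else 0 := by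
  rw [dotProduct_lowVec]
  split_ifs with hfg
  · subst hfg
    rw [sup_idem]
    ring
  · rw [(hs f.2 g.2 (Subtype.coe_ne_coe.mpr hfg)).2.card_filter_ne_top]
    push_cast
    ring

/-- By `exists_eq_bot_iff_not_of_adj`, at most one vertex in the support of `c` contains a `0`
and at most one does not. -/
lemma eq_zero_of_sum_eq_zero_of_sum_mul_lowVec_eq_zero {c : s → ℚ}
    (hsingle : ∀ f, c f ≠ 0 → #{i | f.1.1 i ≠ ⊤} = 1) (hsum : ∑ f, c f = 0)
    (hsum_t : ∑ f, c f * lowVec f.1.1 none = 0) (f : s) : c f = 0 := by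
  have hiff {f g : s} (hgf : g ≠ f) (hcg : c g ≠ 0) (hcf : c f ≠ 0) :=
    exists_eq_bot_iff_not_of_adj (hs g.2 f.2 (Subtype.coe_ne_coe.mpr hgf)) (hsingle g hcg)
      (hsingle f hcf)
  have hbot {f : s} (hf : ∃ i, f.1.1 i = ⊥) : c f = 0 := by
    by_contra hcf
    have hsum_t_eq : ∑ g, c g * lowVec g.1.1 none = c f * lowVec f.1.1 none :=
      Fintype.sum_eq_single f fun g hgf => by
        by_cases hcg : c g = 0
        · simp [hcg]
        have hg : ¬∃ i, g.1.1 i = ⊥ := fun hg => (hiff hgf hcg hcf).mp hg hf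
        simp [lowVec, hg]
    rw [hsum_t_eq] at hsum_t
    simp [lowVec, hf, hcf] at hsum_t
  by_contra hcf
  have hf : ¬∃ i, f.1.1 i = ⊥ := fun h => hcf (hbot h)
  have hsum_eq : ∑ g, c g = c f := Fintype.sum_eq_single f fun g hgf => by
    by_contra hcg
    exact hcg (hbot ((hiff hgf hcg hcf).mpr hf))
  exact hcf (hsum_eq ▸ hsum)

lemma linearIndependent_lowVec : LinearIndependent ℚ fun f : s => lowVec f.1.1 := by
  rw [Fintype.linearIndependent_iff]
  intro c hc
  set t : s → ℚ := fun f => lowVec f.1.1 none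
  set d : s → ℚ := fun f => (#{i | f.1.1 i ≠ ⊤} : ℚ) - 1 with hd
  have hd_nonneg (f : s) : 0 ≤ d f := by
    obtain ⟨x, hx⟩ := Function.ne_iff.mp f.1.2.2
    simpa [hd] using card_pos.mpr ⟨x, by simpa using hx⟩
  have hzero := sum_sq_add_sum_mul_sq_add_sum_eq_zero (dotProduct_lowVec_of_isClique hs) hc
  have hsum_d_nonneg : 0 ≤ ∑ f, c f ^ 2 * d f :=
    sum_nonneg fun f _ => mul_nonneg (sq_nonneg _) (hd_nonneg f)
  have hsum_d : ∑ f, c f ^ 2 * d f = 0 := by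
    nlinarith [sq_nonneg (∑ f, c f), sq_nonneg (∑ f, c f * t f)]
  refine eq_zero_of_sum_eq_zero_of_sum_mul_lowVec_eq_zero hs (fun f hcf => ?_)
    (by nlinarith [sq_nonneg (∑ f, c f), sq_nonneg (∑ f, c f * t f)])
    (by nlinarith [sq_nonneg (∑ f, c f), sq_nonneg (∑ f, c f * t f)])
  have hterm := (sum_eq_zero_iff_of_nonneg fun f _ => mul_nonneg (sq_nonneg (c f))
    (hd_nonneg f)).mp hsum_d f (mem_univ f)
  have : d f = 0 := (mul_eq_zero.mp hterm).resolve_left (pow_ne_zero 2 hcf)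
  simp only [hd, sub_eq_zero] at this
  exact_mod_cast this

lemma card_le_of_isClique : #s ≤ Fintype.card ι + 1 := by
  simpa using (linearIndependent_lowVec hs).fintype_card_le_finrank

end CliqueBound

section ExtremalClique

variable {ι : Type*} [DecidableEq ι]

noncomputable def cliqueCode (i : ι) (o : Option ι) : ι → Fin 3 :=
  fun x => if o = some x then ⊥ else update (⊤ : ι → Fin 3) i 1 x

lemma cliqueCode_eq_bot_iff {i x : ι} {o : Option ι} : cliqueCode i o x = ⊥ ↔ o = some x := by
  unfold cliqueCode
  split_ifs with h
  · simpa using h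
  · simp only [h, iff_false, update_apply, Pi.top_apply]
    split_ifs
    · decide
    · decide

lemma cliqueCode_self_ne_top (i : ι) (o : Option ι) : cliqueCode i o i ≠ ⊤ := by
  unfold cliqueCode
  split_ifs
  · decide
  · simpa using (by decide : (1 : Fin 3) ≠ ⊤)

lemma cliqueCode_ne_one {i x : ι} (hx : x ≠ i) (o : Option ι) : cliqueCode i o x ≠ 1 := by
  unfold cliqueCode
  split_ifs
  · decide
  · simpa [hx] using (by decide : (⊤ : Fin 3) ≠ 1)

lemma cliqueCode_sup_cliqueCode {i : ι} {o o' : Option ι} (h : o ≠ o') :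
    cliqueCode i o ⊔ cliqueCode i o' = update ⊤ i 1 := by
  funext x
  simp only [cliqueCode, Pi.sup_apply]
  split_ifs with h₁ h₂ h₂
  · exact absurd (h₁.trans h₂.symm) h
  all_goals simp

variable [Nontrivial ι]

noncomputable def cliqueVertex (i : ι) (o : Option ι) : CodeVertex ι :=
  ⟨cliqueCode i o, fun h => by
    obtain ⟨x, hx⟩ : ∃ x, o ≠ some x := by
      cases o with
      | none => exact ⟨Classical.arbitrary ι, by simp⟩
      | some j => exact (exists_ne j).imp fun x hx => by simpa using hx.symm
    exact hx (cliqueCode_eq_bot_iff.mp (congrFun h x)),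
  fun h => cliqueCode_self_ne_top i o (congrFun h i)⟩

@[simp] lemma coe_cliqueVertex (i : ι) (o : Option ι) :
    (cliqueVertex i o).1 = cliqueCode i o := rfl

lemma cliqueVertex_none (i : ι) : cliqueVertex i none = primeVertex i :=
  Subtype.ext <| funext fun x => by simp [cliqueCode]

lemma cliqueVertex_injective (i : ι) : Injective (cliqueVertex i) := fun o o' h =>
  Option.ext fun x => by
    rw [← cliqueCode_eq_bot_iff, ← cliqueCode_eq_bot_iff (i := i), ← coe_cliqueVertex, h,
      coe_cliqueVertex]

lemma isClique_range_cliqueVertex (i : ι) :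
    (codeGraph ι).IsClique (Set.range (cliqueVertex i)) := by
  rintro _ ⟨o, rfl⟩ _ ⟨o', rfl⟩ hne
  refine ⟨hne, ?_⟩
  rw [coe_cliqueVertex, coe_cliqueVertex, cliqueCode_sup_cliqueCode fun h => hne (congrArg _ h)]
  exact isPrimeCode_update_top_one i

lemma exists_adj_not_adj_cliqueVertex_some {i j : ι} (hji : j ≠ i) {o : Option ι}
    (ho : o ≠ some j) :
    ∃ w ∉ Set.range (cliqueVertex i),
      (codeGraph ι).Adj w (cliqueVertex i (some j)) ∧ ¬(codeGraph ι).Adj w (cliqueVertex i o) := by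
  have hj_bot : cliqueCode i (some j) j = ⊥ := cliqueCode_eq_bot_iff.mpr rfl
  refine ⟨primeVertex j, ?_, adj_primeVertex ?_ ?_, not_adj_primeVertex ?_⟩
  · rintro ⟨o', ho'⟩
    exact cliqueCode_self_ne_top i o' (by simpa [hji.symm] using congrArg (·.1 i) ho')
  · simp [hj_bot]
  · intro h
    exact (by decide : (1 : Fin 3) ≠ ⊥) (by simpa [hj_bot] using congrArg (·.1 j) h)
  · simp [cliqueCode, ho, hji]

lemma exists_adj_not_adj_cliqueVertex_none {i k : ι} (hki : k ≠ i) :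
    ∃ w ∉ Set.range (cliqueVertex i),
      (codeGraph ι).Adj w (cliqueVertex i none) ∧
        ¬(codeGraph ι).Adj w (cliqueVertex i (some i)) := by
  have hk : cliqueCode k (some i) k = 1 := by simp [cliqueCode, hki.symm]
  have hi : cliqueCode k (some i) i = ⊥ := cliqueCode_eq_bot_iff.mpr rfl
  refine ⟨cliqueVertex k (some i), ?_, ?_, ?_⟩
  · rintro ⟨o, ho⟩
    exact cliqueCode_ne_one hki o ((congrArg (·.1 k) ho).trans hk)
  · rw [cliqueVertex_none]
    refine (adj_primeVertex (by simp [hi]) fun h => ?_).symm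
    exact (by decide : (1 : Fin 3) ≠ ⊥) (by simpa [hi] using congrArg (·.1 i) h)
  · rintro ⟨-, hp⟩
    exact hp.ne_bot i (by simp [hi, cliqueCode_eq_bot_iff.mpr rfl])

lemma exists_xor_adj_cliqueVertex {i k : ι} (hki : k ≠ i) {o o' : Option ι} (hoo' : o ≠ o') :
    ∃ w ∉ Set.range (cliqueVertex i),
      Xor ((codeGraph ι).Adj w (cliqueVertex i o)) ((codeGraph ι).Adj w (cliqueVertex i o')) := by
  by_cases ho : ∃ j ≠ i, o = some j
  · obtain ⟨j, hji, rfl⟩ := ho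
    obtain ⟨w, hw, h₁, h₂⟩ := exists_adj_not_adj_cliqueVertex_some hji hoo'.symm
    exact ⟨w, hw, .inl ⟨h₁, h₂⟩⟩
  by_cases ho' : ∃ j ≠ i, o' = some j
  · obtain ⟨j, hji, rfl⟩ := ho'
    obtain ⟨w, hw, h₁, h₂⟩ := exists_adj_not_adj_cliqueVertex_some hji hoo'
    exact ⟨w, hw, .inr ⟨h₁, h₂⟩⟩
  have hcases {o : Option ι} (ho : ¬∃ j ≠ i, o = some j) : o = none ∨ o = some i := by
    cases o with
    | none => exact .inl rfl
    | some j => exact .inr (by simpa using ho)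
  obtain ⟨w, hw, h₁, h₂⟩ := exists_adj_not_adj_cliqueVertex_none (ι := ι) hki
  rcases hcases ho with rfl | rfl <;> rcases hcases ho' with rfl | rfl
  all_goals first
    | exact absurd rfl hoo'
    | exact ⟨w, hw, .inl ⟨h₁, h₂⟩⟩
    | exact ⟨w, hw, .inr ⟨h₁, h₂⟩⟩

end ExtremalClique

variable {ι : Type*} [Fintype ι] [DecidableEq ι]

lemma card_vertices [Nonempty ι] :
    Fintype.card (CodeVertex ι) = 3 ^ Fintype.card ι - 2 := by
  have hbt : (⊥ : ι → Fin 3) ≠ ⊤ := fun h =>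
    (by decide : (⊥ : Fin 3) ≠ ⊤) (congrFun h (Classical.arbitrary ι))
  have hfilter : ({f | f ≠ ⊥ ∧ f ≠ ⊤} : Finset (ι → Fin 3)) = univ \ {⊥, ⊤} := by
    ext
    simp
  rw [Fintype.card_subtype, hfilter, card_sdiff_of_subset (subset_univ _), card_pair hbt,
    card_univ, Fintype.card_fun, Fintype.card_fin]

theorem sdim_eq [Nontrivial ι] :
    sdim (codeGraph ι) = (3 ^ Fintype.card ι - Fintype.card ι - 3 : ℕ) := by
  obtain ⟨i, k, hik⟩ := exists_pair_ne ι
  have hG := adj_or_exists_adj_adj (ι := ι)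
  have hC : #(univ.image (cliqueVertex (ι := ι) i)) = Fintype.card ι + 1 := by
    rw [card_image_of_injective _ (cliqueVertex_injective i), card_univ, Fintype.card_option]
  have hcoe : ((univ.image (cliqueVertex i) : Finset _) : Set _) = Set.range (cliqueVertex i) := by
    simp
  refine le_antisymm ?_ ?_
  · refine (sdim_le_card_sub hG _ (hcoe ▸ isClique_range_cliqueVertex i) ?_).trans ?_
    · simp only [mem_image, mem_univ, true_and]
      rintro _ ⟨o, rfl⟩ _ ⟨o', rfl⟩ hne
      obtain ⟨w, hw, hxor⟩ := exists_xor_adj_cliqueVertex hik.symm fun h => hne (congrArg _ h)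
      exact ⟨w, fun hw' => hw (by simpa using hw'), hxor⟩
    · rw [hC, card_vertices]
      norm_cast
      omega
  · refine le_trans (le_of_eq ?_) (card_sub_le_sdim hG fun s hs => card_le_of_isClique hs)
    rw [card_vertices]
    norm_cast
    omega

end codeGraph

section PIS

variable {ι : Type*} [Fintype ι] {R : ι → Type*} [∀ i, CommRing (R i)] {M : ∀ i, Ideal (R i)}

noncomputable def idealCodeIso
    (hM : ∀ i, M i ≠ ⊥ ∧ M i ≠ ⊤ ∧ ∀ I : Ideal (R i), I ≠ ⊥ → I ≠ ⊤ → I = M i) :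
    Ideal (∀ i, R i) ≃o (ι → Fin 3) :=
  Ideal.piOrderIso.trans
    { toEquiv := Equiv.piCongrRight fun i => (finThreeOrderIso (hM i)).symm.toEquiv
      map_rel_iff' := by simp [Pi.le_def] }

lemma isPrime_iff_isPrimeCode_idealCodeIso
    (hM : ∀ i, M i ≠ ⊥ ∧ M i ≠ ⊤ ∧ ∀ I : Ideal (R i), I ≠ ⊥ → I ≠ ⊤ → I = M i)
    (I : Ideal (∀ i, R i)) : I.IsPrime ↔ IsPrimeCode (idealCodeIso hM I) := by
  have hI : I = Ideal.pi (Ideal.piOrderIso I) := (Ideal.piOrderIso.symm_apply_apply I).symm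
  conv_lhs => rw [hI]
  rw [Ideal.isPrime_pi_iff]
  refine exists_congr fun i => and_congr ?_ (forall₂_congr fun j _ => ?_)
  · rw [Ideal.isPrime_iff_eq_of_forall_eq (hM i)]
    change _ ↔ (finThreeOrderIso (hM i)).symm _ = 1
    rw [OrderIso.symm_apply_eq, finThreeOrderIso_one]
    rfl
  · change _ ↔ (finThreeOrderIso (hM j)).symm _ = ⊤
    rw [map_eq_top_iff]
    rfl

noncomputable def pisIsoCodeGraph
    (hM : ∀ i, M i ≠ ⊥ ∧ M i ≠ ⊤ ∧ ∀ I : Ideal (R i), I ≠ ⊥ → I ≠ ⊤ → I = M i) :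
    PIS (∀ i, R i) ≃g codeGraph ι where
  toEquiv := (idealCodeIso hM).toEquiv.subtypeEquiv fun I => by
    simp [map_eq_bot_iff, map_eq_top_iff]
  map_rel_iff' := by
    rintro ⟨I, hI⟩ ⟨J, hJ⟩
    simp [PIS, isPrime_iff_isPrimeCode_idealCodeIso hM, Submodule.add_eq_sup]

end PIS

/-- If each `Rᵢ` is a local ring with unique nonzero proper ideal (`n ≥ 2`),
then `sdim (PIS R) = 3^n - n - 3`. -/
theorem pis_sdim_of_uniqueIdeal {n : ℕ} (hn : 2 ≤ n)
    (R : Fin n → Type*) [∀ i, CommRing (R i)] (M : ∀ i, Ideal (R i))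
    (hM : ∀ i, M i ≠ ⊥ ∧ M i ≠ ⊤ ∧
      ∀ I : Ideal (R i), I ≠ ⊥ → I ≠ ⊤ → I = M i) :
    sdim (PIS (∀ i, R i)) = (3 ^ n - n - 3 : ℕ) := by
  have : Nontrivial (Fin n) := Fin.nontrivial_iff_two_le.mpr hn
  rw [sdim_congr (pisIsoCodeGraph hM), codeGraph.sdim_eq, Fintype.card_fin]
end

section
/- Let R ≅ R₁ × ⋯ × Rₙ (n ≥ 2), where each (Rᵢ, Mᵢ) is a local principal ideal ring with at least two nonzero proper ideals. Then the clique number of PIS(R) equals n + 1. -/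
open SimpleGraph

/-!
Ideals of `∏ Rᵢ` are tuples of ideals (`Ideal.piOrderIso`), and its primes are the tuples
`(⊤, …, Mₐ, …, ⊤)`. So if `I + J` is prime, the sets `N(I)`, `N(J)` of indices of proper
components (`Ideal.properIndices`) meet in a single index `a`, where `Iₐ + Jₐ = Mₐ`. An ideal of a
local principal ideal ring is never the sum of two smaller ones, so at most two vertices of a clique
have `N = {a}`. A family of nonempty subsets of an `n`-set meeting pairwise in one point, with no
singleton taken more than twice, has at most `n + 1` members: if a member is a singleton `{a}`, all
members pass through `a` and are disjoint away from it; otherwise Fisher's inequality applies, the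
Gram matrix `diag(|Nᵢ| - 1) + 𝟙𝟙ᵀ` of the incidence vectors being positive definite.

Conversely, `(M₀², ⊤, …, ⊤)` together with the tuples having `M₀` at `0`, `Mⱼ` at `j` and `⊤`
elsewhere form a clique of size `n + 1`: all pairwise sums are the prime `(M₀, ⊤, …, ⊤)`, and the
tuples are distinct because `M₀² ≠ M₀` by Nakayama.
-/

open Finset Ideal IsLocalRing

open Matrix in
theorem card_le_of_card_inter_eq_one {α ι : Type*} [Fintype ι] [DecidableEq ι]
    (s : Finset α) (N : α → Finset ι)
    (hinter : ∀ I ∈ s, ∀ J ∈ s, I ≠ J → #(N I ∩ N J) = 1)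
    (hcard : ∀ I ∈ s, 2 ≤ #(N I)) :
    #s ≤ Fintype.card ι := by
  classical
  let A : Matrix s ι ℚ := of fun I x => if x ∈ N I then 1 else 0
  have hgram : A * Aᵀ = diagonal (fun I : s => (#(N I) : ℚ) - 1) + vecMulVec (1 : s → ℚ) 1 := by
    ext I J
    have hAA : (A * Aᵀ) I J = #(N I ∩ N J) := by
      simp only [A, mul_apply, transpose_apply, of_apply, ← ite_and, mul_boole, Finset.sum_boole]
      congr 2; ext x; simp [and_comm]
    rw [hAA]
    rcases eq_or_ne I J with rfl | hIJ
    · simp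
    · simp [hIJ, hinter I I.2 J J.2 (Subtype.coe_injective.ne hIJ)]
  have hpos : (A * Aᵀ).PosDef := by
    rw [hgram]
    refine (PosDef.diagonal fun I => ?_).add_posSemidef ?_
    · exact sub_pos.mpr (by exact_mod_cast hcard I I.2)
    · simpa using posSemidef_vecMulVec_self_star (1 : s → ℚ)
  calc #s = (A * Aᵀ).rank := by rw [rank_of_isUnit _ hpos.isUnit, Fintype.card_coe]
    _ ≤ A.rank := rank_mul_le_left _ _
    _ ≤ Fintype.card ι := rank_le_card_width A

theorem card_le_card_add_one_of_inter_eq_singleton {α ι : Type*} [Fintype ι] [DecidableEq ι]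
    (s : Finset α) (N : α → Finset ι)
    (hinter : ∀ I ∈ s, ∀ J ∈ s, I ≠ J → ∃ a, N I ∩ N J = {a})
    (hne : ∀ I ∈ s, (N I).Nonempty)
    (hsingleton : ∀ a, #{I ∈ s | N I = {a}} ≤ 2) :
    #s ≤ Fintype.card ι + 1 := by
  by_cases hex : ∃ I₀ ∈ s, ∃ a, N I₀ = {a}
  · obtain ⟨I₀, hI₀, a, ha⟩ := hex
    have hmem : ∀ J ∈ s, a ∈ N J := by
      intro J hJ
      rcases eq_or_ne I₀ J with rfl | hI₀J
      · simp [ha]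
      obtain ⟨b, hb⟩ := hinter I₀ hI₀ J hJ hI₀J
      have hbI₀J : b ∈ N I₀ ∩ N J := hb ▸ mem_singleton_self b
      rw [mem_inter, ha, mem_singleton] at hbI₀J
      exact hbI₀J.1 ▸ hbI₀J.2
    have hdisj : (s : Set α).PairwiseDisjoint fun J => (N J).erase a := by
      intro J hJ K hK hJK
      obtain ⟨b, hb⟩ := hinter J hJ K hK hJK
      have hab : a = b := mem_singleton.mp (hb ▸ mem_inter.mpr ⟨hmem J hJ, hmem K hK⟩)
      rw [Function.onFun, Finset.disjoint_left]
      intro x hxJ hxK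
      have := hb ▸ mem_inter.mpr ⟨mem_of_mem_erase hxJ, mem_of_mem_erase hxK⟩
      exact ne_of_mem_erase hxJ (hab ▸ mem_singleton.mp this)
    have hfiber : {J ∈ s | (N J).erase a = ∅} = {J ∈ s | N J = {a}} :=
      filter_congr fun J hJ => by simp [erase_eq_empty_iff, (hne J hJ).ne_empty]
    have hunion : #(s.biUnion fun J => (N J).erase a) ≤ Fintype.card ι - 1 := by
      rw [← card_univ, ← card_erase_of_mem (mem_univ a)]
      exact card_le_card (biUnion_subset.mpr fun J _ => erase_subset_erase a (subset_univ _))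
    have := card_le_card_biUnion_add_card_fiber hdisj
    rw [hfiber] at this
    have := hsingleton a
    have : 0 < Fintype.card ι := Fintype.card_pos_iff.mpr ⟨a⟩
    omega
  · push Not at hex
    refine (card_le_of_card_inter_eq_one s N (fun I hI J hJ hIJ => ?_) fun I hI => ?_).trans
      (Nat.le_succ _)
    · obtain ⟨a, ha⟩ := hinter I hI J hJ hIJ
      simp [ha]
    · by_contra! h
      have : #(N I) = 1 := by have := (hne I hI).card_pos; omega
      obtain ⟨a, ha⟩ := card_eq_one.mp this
      exact hex I hI a ha

namespace IsLocalRing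

variable {A : Type*} [CommRing A] [IsLocalRing A]

theorem eq_or_eq_of_sup_eq_span_singleton {I J : Ideal A} {π : A} (h : I ⊔ J = span {π}) :
    I = span {π} ∨ J = span {π} := by
  have hI : I ≤ span {π} := h ▸ le_sup_left
  have hJ : J ≤ span {π} := h ▸ le_sup_right
  suffices π ∈ I ∨ π ∈ J by
    rw [← span_singleton_le_iff_mem, ← span_singleton_le_iff_mem] at this
    exact this.imp hI.antisymm hJ.antisymm
  obtain ⟨a, ha, b, hb, hab⟩ := Submodule.mem_sup.mp (h ▸ mem_span_singleton_self π)
  obtain ⟨u, rfl⟩ := mem_span_singleton'.mp (hI ha)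
  obtain ⟨v, rfl⟩ := mem_span_singleton'.mp (hJ hb)
  by_cases hu : IsUnit u
  · exact Or.inl ((unit_mul_mem_iff_mem I hu).mp ha)
  by_cases hv : IsUnit v
  · exact Or.inr ((unit_mul_mem_iff_mem J hv).mp hb)
  have hunit : IsUnit (1 - (u + v)) :=
    isUnit_one_sub_self_of_mem_nonunits _ <| (mem_maximalIdeal _).mp <|
      add_mem ((mem_maximalIdeal u).mpr hu) ((mem_maximalIdeal v).mpr hv)
  have hπ : (1 - (u + v)) * π = 0 := by linear_combination -hab
  exact Or.inl (by simp [hunit.mul_right_eq_zero.mp hπ])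

theorem eq_top_or_eq_top_of_sup_eq_top {I J : Ideal A} (h : I ⊔ J = ⊤) : I = ⊤ ∨ J = ⊤ := by
  simpa using eq_or_eq_of_sup_eq_span_singleton (π := (1 : A)) (by simpa using h)

theorem eq_or_eq_of_sup_eq [IsPrincipalIdealRing A] {I J K : Ideal A} (h : I ⊔ J = K) :
    I = K ∨ J = K := by
  rw [← K.span_singleton_generator] at h ⊢
  exact eq_or_eq_of_sup_eq_span_singleton h

theorem maximalIdeal_sq_ne_self [IsNoetherianRing A] (h : maximalIdeal A ≠ ⊥) :
    maximalIdeal A ^ 2 ≠ maximalIdeal A := fun hsq =>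
  h <| Submodule.eq_bot_of_le_smul_of_le_jacobson_bot _ _ (IsNoetherian.noetherian _)
    (by rw [smul_eq_mul, ← sq, hsq]) (maximalIdeal_le_jacobson ⊥)

end IsLocalRing

namespace Ideal

variable {ι : Type*} [Fintype ι] {R : ι → Type*} [∀ i, CommRing (R i)]

theorem piOrderIso_comap_evalRingHom [DecidableEq ι] (Q : ∀ i, Ideal (R i)) (a : ι) :
    piOrderIso ((Q a).comap (Pi.evalRingHom R a)) = fun i => if i = a then Q i else ⊤ := by
  rw [← OrderIso.eq_symm_apply]
  ext x
  change x a ∈ Q a ↔ ∀ i, x i ∈ if i = a then Q i else ⊤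
  constructor
  · intro hx i
    split_ifs with h
    · exact h ▸ hx
    · trivial
  · intro hx
    simpa using hx a

theorem exists_piOrderIso_eq_of_isPrime [DecidableEq ι] [∀ i, IsLocalRing (R i)]
    [∀ i, IsArtinianRing (R i)]
    {P : Ideal (∀ i, R i)} (hP : P.IsPrime) :
    ∃ a, piOrderIso P = fun i => if i = a then maximalIdeal (R i) else ⊤ := by
  obtain ⟨a, q, hq⟩ := PrimeSpectrum.exists_comap_evalRingHom_eq ⟨P, hP⟩
  have hqM : q.asIdeal = maximalIdeal (R a) :=
    eq_maximalIdeal ((IsArtinianRing.isPrime_iff_isMaximal _).mp q.isPrime)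
  have hPq : P = q.asIdeal.comap (Pi.evalRingHom R a) := congrArg PrimeSpectrum.asIdeal hq.symm
  rw [hPq, hqM]
  exact ⟨a, piOrderIso_comap_evalRingHom (fun i => maximalIdeal (R i)) a⟩

open Classical in
noncomputable def properIndices (I : Ideal (∀ i, R i)) : Finset ι := {i | piOrderIso I i ≠ ⊤}

theorem mem_properIndices {I : Ideal (∀ i, R i)} {i : ι} :
    i ∈ I.properIndices ↔ piOrderIso I i ≠ ⊤ := by
  simp [properIndices]

theorem properIndices_nonempty {I : Ideal (∀ i, R i)} (hI : I ≠ ⊤) :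
    I.properIndices.Nonempty := by
  contrapose! hI
  rw [← _root_.map_eq_top_iff piOrderIso]
  funext i
  simpa [mem_properIndices] using Finset.eq_empty_iff_forall_notMem.mp hI i

theorem eq_of_properIndices_eq_singleton {I J : Ideal (∀ i, R i)} {a : ι}
    (hI : I.properIndices = {a}) (hJ : J.properIndices = {a})
    (h : piOrderIso I a = piOrderIso J a) : I = J := by
  refine piOrderIso.injective (funext fun i => ?_)
  rcases eq_or_ne i a with rfl | hia
  · exact h
  · have hIi : i ∉ I.properIndices := by simp [hI, hia]
    have hJi : i ∉ J.properIndices := by simp [hJ, hia]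
    rw [mem_properIndices, not_not] at hIi hJi
    rw [hIi, hJi]

theorem properIndices_inter_eq_singleton_of_isPrime_sup [DecidableEq ι] [∀ i, IsLocalRing (R i)]
    [∀ i, IsArtinianRing (R i)] {I J : Ideal (∀ i, R i)} (h : (I ⊔ J).IsPrime) :
    ∃ a, I.properIndices ∩ J.properIndices = {a} ∧
      piOrderIso I a ⊔ piOrderIso J a = maximalIdeal (R a) := by
  obtain ⟨a, ha⟩ := exists_piOrderIso_eq_of_isPrime h
  have hsup i : piOrderIso I i ⊔ piOrderIso J i =
      if i = a then maximalIdeal (R i) else ⊤ := by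
    rw [← congrFun ha i, SupHomClass.map_sup]; rfl
  refine ⟨a, Finset.ext fun i => ?_, by simpa using hsup a⟩
  rw [Finset.mem_inter, mem_properIndices, mem_properIndices, Finset.mem_singleton]
  constructor
  · rintro ⟨hI, hJ⟩
    by_contra hia
    have := hsup i
    rw [if_neg hia] at this
    exact (eq_top_or_eq_top_of_sup_eq_top this).elim hI hJ
  · rintro rfl
    have hM := (hsup i).trans (if_pos rfl)
    have hMtop := (maximalIdeal.isMaximal (R i)).ne_top
    exact ⟨fun h => hMtop (by rw [← hM, h, top_sup_eq]),
      fun h => hMtop (by rw [← hM, h, sup_top_eq])⟩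

end Ideal

theorem SimpleGraph.cliqueNum_eq_of_isNClique {α : Type*} {G : SimpleGraph α} {k : ℕ}
    {s : Finset α} (hs : G.IsNClique k s) (hle : ∀ t : Finset α, G.IsClique t → #t ≤ k) :
    G.cliqueNum = k := by
  have hbdd : BddAbove {m | ∃ t, G.IsNClique m t} := ⟨k, by
    rintro _ ⟨t, ht⟩
    exact ht.card_eq ▸ hle t ht.isClique⟩
  obtain ⟨t, ht⟩ := G.exists_isNClique_cliqueNum
  exact le_antisymm (ht.card_eq ▸ hle t ht.isClique) (le_csSup hbdd ⟨s, hs⟩)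

namespace PIS

theorem exists_isNClique_of_injective {A κ : Type*} [CommRing A] [Fintype κ] {v : κ → Ideal A}
    (hv : Function.Injective v) (hv_ne : ∀ k, v k ≠ ⊥ ∧ v k ≠ ⊤)
    (hprime : ∀ k l, k ≠ l → (v k ⊔ v l).IsPrime) :
    ∃ t, (PIS A).IsNClique (Fintype.card κ) t := by
  let w : κ ↪ {I : Ideal A // I ≠ ⊥ ∧ I ≠ ⊤} :=
    ⟨fun k => ⟨v k, hv_ne k⟩, fun k l h => hv (congrArg Subtype.val h)⟩
  refine ⟨univ.map w, ⟨?_, by simp⟩⟩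
  simp only [coe_map, coe_univ, Set.image_univ]
  rintro _ ⟨k, rfl⟩ _ ⟨l, rfl⟩ hkl
  exact ⟨hkl, by rw [Ideal.add_eq_sup]; exact hprime k l fun h => hkl (h ▸ rfl)⟩

variable {ι : Type*} [DecidableEq ι] {R : ι → Type*} [∀ i, CommRing (R i)]
  [∀ i, IsLocalRing (R i)]

theorem card_filter_properIndices_eq_singleton_le_two [Fintype ι] [∀ i, IsArtinianRing (R i)]
    [∀ i, IsPrincipalIdealRing (R i)] {s : Finset {I : Ideal (∀ i, R i) // I ≠ ⊥ ∧ I ≠ ⊤}}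
    (hs : (PIS (∀ i, R i)).IsClique s) (a : ι) :
    #{I ∈ s | I.1.properIndices = {a}} ≤ 2 := by
  set t := {I ∈ s | I.1.properIndices = {a}}
  have hpair : ∀ I ∈ t, ∀ J ∈ t, I ≠ J →
      piOrderIso I.1 a = maximalIdeal (R a) ∨ piOrderIso J.1 a = maximalIdeal (R a) := by
    intro I hI J hJ hIJ
    rw [mem_filter] at hI hJ
    obtain ⟨b, hb, hsup⟩ :=
      properIndices_inter_eq_singleton_of_isPrime_sup (by simpa using (hs hI.1 hJ.1 hIJ).2)
    rw [hI.2, hJ.2, inter_self, singleton_inj] at hb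
    exact hb ▸ eq_or_eq_of_sup_eq hsup
  have hmax : #{I ∈ t | piOrderIso I.1 a = maximalIdeal (R a)} ≤ 1 :=
    card_le_one.mpr fun I hI J hJ => by
      rw [mem_filter, mem_filter] at hI hJ
      exact Subtype.ext (eq_of_properIndices_eq_singleton hI.1.2 hJ.1.2 (hI.2.trans hJ.2.symm))
  have hnotmax : #{I ∈ t | ¬piOrderIso I.1 a = maximalIdeal (R a)} ≤ 1 :=
    card_le_one.mpr fun I hI J hJ => by
      rw [mem_filter] at hI hJ
      by_contra hIJ
      exact (hpair I hI.1 J hJ.1 hIJ).elim hI.2 hJ.2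
  have := card_filter_add_card_filter_not (s := t) fun I => piOrderIso I.1 a = maximalIdeal (R a)
  omega

theorem card_le_of_isClique [Fintype ι] [∀ i, IsArtinianRing (R i)]
    [∀ i, IsPrincipalIdealRing (R i)]
    {s : Finset {I : Ideal (∀ i, R i) // I ≠ ⊥ ∧ I ≠ ⊤}} (hs : (PIS (∀ i, R i)).IsClique s) :
    #s ≤ Fintype.card ι + 1 :=
  card_le_card_add_one_of_inter_eq_singleton s (fun I => I.1.properIndices)
    (fun I hI J hJ hIJ => (properIndices_inter_eq_singleton_of_isPrime_sup
      (by simpa using (hs hI hJ hIJ).2)).imp fun _ => And.left)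
    (fun I _ => properIndices_nonempty I.2.2)
    (card_filter_properIndices_eq_singleton_le_two hs)

variable (R) in
def cliqueTuple (i₀ : ι) : Option ι → ∀ i, Ideal (R i)
  | none => fun i => if i = i₀ then maximalIdeal (R i) ^ 2 else ⊤
  | some j => fun i => if i = i₀ ∨ i = j then maximalIdeal (R i) else ⊤

theorem cliqueTuple_injective {i₀ : ι} (hM : maximalIdeal (R i₀) ^ 2 ≠ maximalIdeal (R i₀)) :
    Function.Injective (cliqueTuple R i₀) := by
  have hMtop i : maximalIdeal (R i) ≠ ⊤ := (maximalIdeal.isMaximal (R i)).ne_top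
  have hC : Function.Injective fun j => cliqueTuple R i₀ (some j) := by
    intro j k hjk
    by_contra hne
    wlog hj : j ≠ i₀ generalizing j k
    · exact this hjk.symm (Ne.symm hne) (not_not.mp hj ▸ Ne.symm hne)
    exact hMtop j (by simpa [cliqueTuple, hj, hne] using congrFun hjk j)
  have hBC j : cliqueTuple R i₀ none ≠ cliqueTuple R i₀ (some j) := fun h =>
    hM (by simpa [cliqueTuple] using congrFun h i₀)
  rintro (_ | j) (_ | k) h
  · rfl
  · exact absurd h (hBC k)
  · exact absurd h.symm (hBC j)
  · exact congrArg some (hC h)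

theorem cliqueTuple_ne_bot_and_ne_top {i₀ i₁ : ι} (hi : i₁ ≠ i₀)
    (hM : maximalIdeal (R i₀) ^ 2 ≠ maximalIdeal (R i₀)) (k : Option ι) :
    cliqueTuple R i₀ k ≠ ⊥ ∧ cliqueTuple R i₀ k ≠ ⊤ := by
  have hMtop : maximalIdeal (R i₀) ≠ ⊤ := (maximalIdeal.isMaximal _).ne_top
  have hMbot : maximalIdeal (R i₀) ≠ ⊥ := fun h => hM (by simp [h])
  rcases k with _ | j
  · exact ⟨fun h => top_ne_bot (α := Ideal (R i₁)) (by simpa [cliqueTuple, hi] using congrFun h i₁),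
      fun h => hMtop (by simpa [cliqueTuple] using congrFun h i₀)⟩
  · exact ⟨fun h => hMbot (by simpa [cliqueTuple] using congrFun h i₀),
      fun h => hMtop (by simpa [cliqueTuple] using congrFun h i₀)⟩

theorem cliqueTuple_sup {i₀ : ι} {k l : Option ι} (hkl : k ≠ l) :
    cliqueTuple R i₀ k ⊔ cliqueTuple R i₀ l =
      fun i => if i = i₀ then maximalIdeal (R i) else ⊤ := by
  funext i
  have hsq : maximalIdeal (R i) ^ 2 ≤ maximalIdeal (R i) := Ideal.pow_le_self two_ne_zero
  rcases k with _ | j <;> rcases l with _ | k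
  · exact absurd rfl hkl
  · by_cases h : i = i₀ <;> simp [cliqueTuple, h, hsq]
  · by_cases h : i = i₀ <;> simp [cliqueTuple, h, hsq]
  · have hjk : j ≠ k := fun h => hkl (h ▸ rfl)
    by_cases h : i = i₀
    · simp [cliqueTuple, h]
    · by_cases hij : i = j
      · subst hij
        simp [cliqueTuple, h, hjk]
      · simp [cliqueTuple, h, hij]

theorem exists_isNClique_card_add_one [Fintype ι] {i₀ i₁ : ι} (hi : i₁ ≠ i₀)
    (hM : maximalIdeal (R i₀) ^ 2 ≠ maximalIdeal (R i₀)) :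
    ∃ t, (PIS (∀ i, R i)).IsNClique (Fintype.card ι + 1) t := by
  have hP : (piOrderIso.symm fun i => if i = i₀ then maximalIdeal (R i) else ⊤).IsPrime := by
    rw [← piOrderIso_comap_evalRingHom, OrderIso.symm_apply_apply]
    exact (IsMaximal.comap_piEvalRingHom (maximalIdeal.isMaximal _)).isPrime
  rw [← Fintype.card_option]
  refine exists_isNClique_of_injective (v := fun k => piOrderIso.symm (cliqueTuple R i₀ k))
    (piOrderIso.symm.injective.comp (cliqueTuple_injective hM)) (fun k => ?_) fun k l hkl => ?_
  · rw [ne_eq, ne_eq, map_eq_bot_iff, _root_.map_eq_top_iff]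
    exact cliqueTuple_ne_bot_and_ne_top hi hM k
  · rw [← SupHomClass.map_sup, cliqueTuple_sup hkl]
    exact hP

end PIS

/-- For `R ≅ R₁ × ⋯ × Rₙ` (`n ≥ 2`) with each `(Rᵢ, Mᵢ)` an Artinian local
principal ideal ring having at least two nonzero proper ideals, the clique
number of `PIS(R)` equals `n + 1`. -/
theorem pis_cliqueNum_of_localPIR {n : ℕ} (hn : 2 ≤ n)
    (R : Fin n → Type*) [∀ i, CommRing (R i)] [∀ i, IsLocalRing (R i)]
    [∀ i, IsPrincipalIdealRing (R i)] [∀ i, IsArtinianRing (R i)]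
    (htwo : ∀ i, ({I : Ideal (R i) | I ≠ ⊥ ∧ I ≠ ⊤}).Nontrivial) :
    (PIS (∀ i, R i)).cliqueNum = n + 1 := by
  have hM : maximalIdeal (R ⟨0, by omega⟩) ≠ ⊥ := by
    obtain ⟨I, hIbot, hItop⟩ := (htwo _).nonempty
    exact fun h => hIbot (le_bot_iff.mp (h ▸ le_maximalIdeal hItop))
  obtain ⟨t, ht⟩ := PIS.exists_isNClique_card_add_one (i₀ := (⟨0, by omega⟩ : Fin n))
    (i₁ := ⟨1, by omega⟩) (by simp [Fin.ext_iff]) (maximalIdeal_sq_ne_self hM)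
  rw [Fintype.card_fin] at ht
  refine cliqueNum_eq_of_isNClique ht fun s hs => ?_
  simpa using PIS.card_le_of_isClique hs
end
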